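/- arXiv:2410.06191 — 2 statements merged into one kernel-verified Lean document; each statement's English description precedes it below -/
import Mathlib

section
/- Let w₀, w_t be nonzero vectors in R^d with ‖w₀‖₂² - ‖w₀ - w_t‖₂² ≥ 1, and let θ be the angle between them. Then θ ≤ ‖w₀ - w_t‖₂. -/
/-!
Writing `r = ‖w₀ - w_t‖` and `a = ‖w₀‖`, the distance `sin θ · a` from `w₀` to the line through
`w_t` is at most `r`, and `r < a` makes `θ` acute, so `θ ≤ arcsin (r / a)`. Since
`arcsin x = arctan (x / √(1 - x²)) ≤ x / √(1 - x²)`, this gives `θ ≤ r / √(a² - r²)`, and the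
hypothesis says exactly that `a² - r² ≥ 1`.
-/

open InnerProductGeometry Real
open scoped RealInnerProductSpace

namespace Real

theorem arctan_le_self {x : ℝ} (hx : 0 ≤ x) : arctan x ≤ x := by
  simpa using le_tan (arctan_nonneg.2 hx) (arctan_lt_pi_div_two x)

theorem arcsin_le_div_sqrt_one_sub_sq {x : ℝ} (h₀ : 0 ≤ x) (h₁ : x < 1) :
    arcsin x ≤ x / √(1 - x ^ 2) := by
  rw [arcsin_eq_arctan ⟨by linarith, h₁⟩]
  exact arctan_le_self (by positivity)

theorem div_div_sqrt_one_sub_div_sq {a : ℝ} (r : ℝ) (ha : 0 < a) :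
    r / a / √(1 - (r / a) ^ 2) = r / √(a ^ 2 - r ^ 2) := by
  rw [div_pow, one_sub_div (by positivity), sqrt_div' _ (sq_nonneg a), sqrt_sq ha.le,
    div_div_div_cancel_right₀ ha.ne']

end Real

namespace InnerProductGeometry

variable {V : Type*} [NormedAddCommGroup V] [InnerProductSpace ℝ V]

theorem angle_lt_pi_div_two_of_inner_pos {x y : V} (h : 0 < ⟪x, y⟫) : angle x y < π / 2 := by
  have hx : x ≠ 0 := by rintro rfl; simp at h
  have hy : y ≠ 0 := by rintro rfl; simp at h
  exact arccos_lt_pi_div_two.2 (by positivity)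

theorem inner_pos_of_norm_sub_lt_norm {x y : V} (h : ‖x - y‖ < ‖x‖) : 0 < ⟪x, y⟫ := by
  nlinarith [norm_sub_sq_real x y, norm_nonneg (x - y), norm_nonneg y]

/-- `sin (angle x y) * ‖x‖` is the distance from `x` to the line through `y`. -/
theorem sin_angle_mul_norm_le_norm_sub (x y : V) : sin (angle x y) * ‖x‖ ≤ ‖x - y‖ := by
  rcases eq_or_ne y 0 with rfl | hy
  · simp
  have hy' : 0 < ‖y‖ := norm_pos_iff.2 hy
  refine le_of_mul_le_mul_right ?_ hy'
  rw [mul_assoc, sin_angle_mul_norm_mul_norm, ← sqrt_sq (by positivity : 0 ≤ ‖x - y‖ * ‖y‖)]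
  refine sqrt_le_sqrt ?_
  rw [mul_pow, norm_sub_sq_real, real_inner_self_eq_norm_sq, real_inner_self_eq_norm_sq]
  nlinarith [sq_nonneg (‖y‖ ^ 2 - ⟪x, y⟫)]

theorem angle_le_arcsin_of_norm_sub_lt_norm {x y : V} (h : ‖x - y‖ < ‖x‖) :
    angle x y ≤ arcsin (‖x - y‖ / ‖x‖) := by
  have hx : 0 < ‖x‖ := (norm_nonneg _).trans_lt h
  have hacute := angle_lt_pi_div_two_of_inner_pos (inner_pos_of_norm_sub_lt_norm h)
  rw [le_arcsin_iff_sin_le' ⟨by linarith [pi_pos, angle_nonneg x y], hacute.le⟩, le_div_iff₀ hx]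
  exact sin_angle_mul_norm_le_norm_sub x y

end InnerProductGeometry

theorem stmt_9_general {d : ℕ} (w₀ wt : EuclideanSpace ℝ (Fin d))
    (h : ‖w₀‖ ^ 2 - ‖w₀ - wt‖ ^ 2 ≥ 1) :
    InnerProductGeometry.angle w₀ wt ≤ ‖w₀ - wt‖ := by
  set r := ‖w₀ - wt‖
  have hr : 0 ≤ r := norm_nonneg _
  have hlt : r < ‖w₀‖ := by nlinarith [norm_nonneg w₀]
  have ha : 0 < ‖w₀‖ := hr.trans_lt hlt
  calc angle w₀ wt ≤ arcsin (r / ‖w₀‖) := angle_le_arcsin_of_norm_sub_lt_norm hlt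
    _ ≤ r / ‖w₀‖ / √(1 - (r / ‖w₀‖) ^ 2) :=
        arcsin_le_div_sqrt_one_sub_sq (by positivity) ((div_lt_one ha).2 hlt)
    _ = r / √(‖w₀‖ ^ 2 - r ^ 2) := div_div_sqrt_one_sub_div_sq r ha
    _ ≤ r := div_le_self hr (one_le_sqrt.2 h)

/-- If `w₀, w_t` are nonzero with `‖w₀‖² - ‖w₀ - w_t‖² ≥ 1`, the angle `θ`
between them satisfies `θ ≤ ‖w₀ - w_t‖`. -/
theorem stmt_9 {d : ℕ} (w₀ wt : EuclideanSpace ℝ (Fin d))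
    (h₀ : w₀ ≠ 0) (ht : wt ≠ 0) (h : ‖w₀‖ ^ 2 - ‖w₀ - wt‖ ^ 2 ≥ 1) :
    InnerProductGeometry.angle w₀ wt ≤ ‖w₀ - wt‖ :=
  stmt_9_general w₀ wt h
end

section
/- Let f: V^m → R satisfy the bounded differences property: for all j and all z₁,...,z_m, z'_j ∈ V, |f(z₁,...,z_m) - f(z₁,...,z_{j-1},z'_j,z_{j+1},...,z_m)| ≤ 1/m. If z₁,...,z_m are independent V-valued random variables, then for all c > 0, P(f(z₁,...,z_m) ≥ E[f] + c) ≤ exp(-2c²m). -/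
/-!
Doob-martingale argument. Integrating out the first coordinate, `f - E f` splits as
`(g - E g) + (f - g)` with `g` the partial average: `g` again has bounded differences in the
remaining coordinates, and for fixed remaining coordinates `f - g` is a centred function of one
independent variable with values in an interval of length `c₀`, hence `(c₀ / 2)²`-sub-Gaussian by
Hoeffding's lemma. Sub-Gaussian constants add under this decomposition, so by induction `f - E f`
is `∑ (cᵢ / 2)²`-sub-Gaussian under the product law, and the Chernoff bound gives the tail
estimate; with `cᵢ = 1 / m` the constant is `1 / (4m)`.
-/

open MeasureTheory ProbabilityTheory Real
open scoped NNReal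

lemma abs_integral_sub_integral_le {β : Type*} [MeasurableSpace β] {ρ : Measure β}
    [IsProbabilityMeasure ρ] {F G : β → ℝ} (hF : Integrable F ρ) (hG : Integrable G ρ) {C : ℝ}
    (h : ∀ x, |F x - G x| ≤ C) :
    |∫ x, F x ∂ρ - ∫ x, G x ∂ρ| ≤ C := by
  rw [← integral_sub hF hG]
  simpa using norm_integral_le_of_norm_le_const (μ := ρ) (f := fun x => F x - G x) (ae_of_all _ h)

section Oscillation

variable {β : Type*} {g : β → ℝ} {d : ℝ}

lemma mem_Icc_sSup_range_sub_of_abs_sub_le (hd : ∀ x y, |g x - g y| ≤ d) (x : β) :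
    g x ∈ Set.Icc (sSup (Set.range g) - d) (sSup (Set.range g)) := by
  have hle : ∀ y, g y ≤ g x + d := fun y => by linarith [(abs_le.1 (hd x y)).1]
  have hbdd : BddAbove (Set.range g) := ⟨g x + d, Set.forall_mem_range.2 hle⟩
  have : sSup (Set.range g) ≤ g x + d := csSup_le ⟨g x, x, rfl⟩ (Set.forall_mem_range.2 hle)
  exact ⟨by linarith, le_csSup hbdd ⟨x, rfl⟩⟩

variable [MeasurableSpace β] {ρ : Measure β} [IsProbabilityMeasure ρ]

lemma integrable_of_abs_sub_le (hg : Measurable g) (hd : ∀ x y, |g x - g y| ≤ d) :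
    Integrable g ρ :=
  .of_mem_Icc _ _ hg.aemeasurable (ae_of_all _ (mem_Icc_sSup_range_sub_of_abs_sub_le hd))

lemma abs_sub_integral_le_of_abs_sub_le (hg : Measurable g) (hd : ∀ x y, |g x - g y| ≤ d)
    (x : β) : |g x - ∫ y, g y ∂ρ| ≤ d := by
  simpa using abs_integral_sub_integral_le (integrable_const (μ := ρ) (g x))
    (integrable_of_abs_sub_le hg hd) (hd x)

lemma hasSubgaussianMGF_sub_integral_of_abs_sub_le {d : ℝ≥0} (hg : Measurable g)
    (hd : ∀ x y, |g x - g y| ≤ d) :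
    HasSubgaussianMGF (fun x => g x - ∫ y, g y ∂ρ) ((d / 2) ^ 2) ρ := by
  have h := hasSubgaussianMGF_of_mem_Icc (μ := ρ) hg.aemeasurable
    (ae_of_all _ (mem_Icc_sSup_range_sub_of_abs_sub_le hd))
  rwa [sub_sub_cancel, NNReal.nnnorm_eq] at h

end Oscillation

namespace ProbabilityTheory

lemma HasSubgaussianMGF.add_prod {β γ : Type*} [MeasurableSpace β] [MeasurableSpace γ]
    {ν : Measure β} {ρ : Measure γ} [SFinite ν] [IsFiniteMeasure ρ]
    {X : β → ℝ} {Y : β × γ → ℝ} {cX cY : ℝ≥0} {C : ℝ}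
    (hX : HasSubgaussianMGF X cX ν) (hY : ∀ b, HasSubgaussianMGF (fun x => Y (b, x)) cY ρ)
    (hY_meas : Measurable Y) (hY_bdd : ∀ p, |Y p| ≤ C) :
    HasSubgaussianMGF (fun p => X p.1 + Y p) (cX + cY) (ν.prod ρ) := by
  have hint : ∀ t, Integrable (fun p => exp (t * X p.1) * exp (t * Y p)) (ν.prod ρ) := fun t =>
    ((hX.integrable_exp_mul t).comp_fst ρ).mul_bdd (c := exp (|t| * C))
      (by fun_prop : Measurable fun p => exp (t * Y p)).aestronglyMeasurable
      (ae_of_all _ fun p => by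
        rw [norm_of_nonneg (exp_pos _).le, exp_le_exp]
        calc t * Y p ≤ |t| * |Y p| := (le_abs_self _).trans (abs_mul _ _).le
          _ ≤ |t| * C := by gcongr; exact hY_bdd p)
  refine ⟨fun t => by simpa only [mul_add, exp_add] using hint t, fun t => ?_⟩
  calc mgf (fun p => X p.1 + Y p) (ν.prod ρ) t
      = ∫ b, exp (t * X b) * mgf (fun x => Y (b, x)) ρ t ∂ν := by
        simp only [mgf, mul_add, exp_add]
        rw [integral_prod _ (hint t)]
        simp only [integral_const_mul]
    _ ≤ ∫ b, exp (t * X b) * exp (cY * t ^ 2 / 2) ∂ν := by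
        refine integral_mono_of_nonneg (ae_of_all _ fun b => ?_)
          ((hX.integrable_exp_mul t).mul_const _) (ae_of_all _ fun b => ?_)
        · exact mul_nonneg (exp_pos _).le mgf_nonneg
        · exact mul_le_mul_of_nonneg_left ((hY b).mgf_le t) (exp_pos _).le
    _ ≤ exp (↑(cX + cY) * t ^ 2 / 2) := by
        rw [integral_mul_const, NNReal.coe_add, add_mul, add_div, exp_add]
        exact mul_le_mul_of_nonneg_right (hX.mgf_le t) (exp_pos _).le

end ProbabilityTheory

theorem hasSubgaussianMGF_pi_sub_integral_of_abs_sub_update_le {n : ℕ} {α : Fin n → Type*}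
    [∀ i, MeasurableSpace (α i)] (μ : ∀ i, Measure (α i)) [∀ i, IsProbabilityMeasure (μ i)]
    {f : (∀ i, α i) → ℝ} (hf : Measurable f) {c : Fin n → ℝ≥0}
    (hbdd : ∀ i z y, |f z - f (Function.update z i y)| ≤ c i) :
    HasSubgaussianMGF (fun z => f z - ∫ z', f z' ∂Measure.pi μ) (∑ i, (c i / 2) ^ 2)
      (Measure.pi μ) := by
  induction n with
  | zero =>
    have hzero : (fun z => f z - ∫ z', f z' ∂Measure.pi μ) = fun _ => 0 := by
      funext z
      simp [Subsingleton.elim _ z]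
    simp [hzero, HasSubgaussianMGF.fun_zero]
  | succ n ih =>
    set ρ := μ 0
    set ν := Measure.pi fun j => μ (Fin.succAbove 0 j)
    let e := (MeasurableEquiv.piFinSuccAbove α 0).trans MeasurableEquiv.prodComm
    have he : MeasurePreserving e (Measure.pi μ) (ν.prod ρ) :=
      Measure.measurePreserving_swap.comp (measurePreserving_piFinSuccAbove μ 0)
    let F : (∀ j, α (Fin.succAbove 0 j)) × α 0 → ℝ := fun p => f (Fin.insertNth 0 p.2 p.1)
    have hFe : ∀ z, F (e z) = f z := fun z => congrArg f (Fin.insertNth_self_removeNth 0 z)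
    have hF : Measurable F := hf.comp e.symm.measurable
    have hF_slice : ∀ y, Measurable fun w => F (y, w) := fun y => hF.comp measurable_prodMk_left
    have hF_osc : ∀ y w w', |F (y, w) - F (y, w')| ≤ c 0 := fun y w w' => by
      simpa [F] using hbdd 0 (Fin.insertNth 0 w y) w'
    let g y := ∫ w, F (y, w) ∂ρ
    have hg : Measurable g := hF.stronglyMeasurable.integral_prod_right'.measurable
    have hg_bdd : ∀ j y v, |g y - g (Function.update y j v)| ≤ c (Fin.succAbove 0 j) :=
      fun j y v => abs_integral_sub_integral_le (integrable_of_abs_sub_le (hF_slice y) (hF_osc y))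
        (integrable_of_abs_sub_le (hF_slice _) (hF_osc _)) fun w => by
          change |f (Fin.insertNth 0 w y) - f (Fin.insertNth 0 w (Function.update y j v))| ≤ _
          rw [Fin.insertNth_update]
          exact hbdd _ _ _
    have hsum := (ih (fun j => μ (Fin.succAbove 0 j)) hg hg_bdd).add_prod
      (Y := fun p => F p - g p.1)
      (fun y => hasSubgaussianMGF_sub_integral_of_abs_sub_le (hF_slice y) (hF_osc y))
      (hF.sub (hg.comp measurable_fst))
      (fun p => abs_sub_integral_le_of_abs_sub_le (hF_slice p.1) (hF_osc p.1) p.2)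
    change HasSubgaussianMGF (fun p => (g p.1 - ∫ y, g y ∂ν) + (F p - g p.1)) _ (ν.prod ρ) at hsum
    have hF_int : Integrable F (ν.prod ρ) :=
      (hsum.integrable.add (integrable_const (∫ y, g y ∂ν))).congr
        (ae_of_all _ fun p => by simp only [Pi.add_apply]; ring)
    have hmean : ∫ y, g y ∂ν = ∫ z, f z ∂Measure.pi μ := by
      simp only [← hFe, he.integral_comp', integral_prod F hF_int, g]
    rw [← he.map_eq] at hsum
    rw [Fin.sum_univ_succAbove _ 0, add_comm ((c 0 / 2) ^ 2)]
    refine (hsum.of_map e.measurable.aemeasurable).congr (ae_of_all _ fun z => ?_)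
    simp only [Function.comp_apply, hFe, hmean]
    ring


theorem stmt_14_general {Ω V : Type*} [MeasurableSpace Ω] [MeasurableSpace V]
    (μ : Measure Ω) [IsProbabilityMeasure μ]
    (m : ℕ) (Z : Fin m → Ω → V)
    (hmeas : ∀ j, Measurable (Z j))
    (hindep : iIndepFun Z μ)
    (f : (Fin m → V) → ℝ) (hf : Measurable f)
    (hbdd : ∀ (j : Fin m) (z : Fin m → V) (z' : V),
      |f z - f (Function.update z j z')| ≤ 1 / m)
    (c : ℝ) (hc : 0 < c) :
    μ {ω | (∫ ω', f (fun j => Z j ω') ∂μ) + c ≤ f fun j => Z j ω}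
      ≤ ENNReal.ofReal (Real.exp (-2 * c ^ 2 * m)) := by
  have hZ : AEMeasurable (fun ω j => Z j ω) μ := (measurable_pi_lambda _ hmeas).aemeasurable
  have hlaw := hindep.map_fun_eq_pi_map fun j => (hmeas j).aemeasurable
  have : ∀ j, IsProbabilityMeasure (μ.map (Z j)) := fun j =>
    Measure.isProbabilityMeasure_map (hmeas j).aemeasurable
  have hsub : HasSubgaussianMGF (fun ω => f (fun j => Z j ω) - ∫ ω', f (fun j => Z j ω') ∂μ)
      (∑ _j : Fin m, ((1 / m : ℝ≥0) / 2) ^ 2) μ := by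
    have h := hasSubgaussianMGF_pi_sub_integral_of_abs_sub_update_le (fun j => μ.map (Z j)) hf
      (c := fun _ => 1 / m) (by simpa using hbdd)
    rw [← hlaw, integral_map hZ hf.aestronglyMeasurable] at h
    exact h.of_map hZ
  have htail := hsub.measure_ge_le hc.le
  rw [ENNReal.le_ofReal_iff_toReal_le (measure_ne_top _ _) (exp_pos _).le]
  convert htail using 2
  · simp only [measureReal_def, le_sub_iff_add_le']
  · simp only [Finset.sum_const, Finset.card_univ, Fintype.card_fin, nsmul_eq_mul, NNReal.coe_mul,
      NNReal.coe_natCast, NNReal.coe_pow, NNReal.coe_div, NNReal.coe_one, NNReal.coe_ofNat]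
    field_simp

/-- McDiarmid's inequality with bounded-differences constant `1/m`: if
`f : V^m → ℝ` changes by at most `1/m` when any single coordinate is changed,
and `z₁,…,z_m` are independent, then for all `c > 0`,
`P(f(z) ≥ E[f(z)] + c) ≤ exp(-2c²m)`. -/
theorem stmt_14 {Ω V : Type*} [MeasurableSpace Ω] [MeasurableSpace V]
    (μ : Measure Ω) [IsProbabilityMeasure μ]
    (m : ℕ) (hm : 0 < m) (Z : Fin m → Ω → V)
    (hmeas : ∀ j, Measurable (Z j))
    (hindep : iIndepFun Z μ)
    (f : (Fin m → V) → ℝ) (hf : Measurable f)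
    (hint : Integrable (fun ω => f fun j => Z j ω) μ)
    (hbdd : ∀ (j : Fin m) (z : Fin m → V) (z' : V),
      |f z - f (Function.update z j z')| ≤ 1 / m)
    (c : ℝ) (hc : 0 < c) :
    μ {ω | (∫ ω', f (fun j => Z j ω') ∂μ) + c ≤ f fun j => Z j ω}
      ≤ ENNReal.ofReal (Real.exp (-2 * c ^ 2 * m)) :=
  stmt_14_general μ m Z hmeas hindep f hf hbdd c hc
end
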